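/- Under Assumption 1, with positive non-increasing sequences $\{\gamma_k\}, \{\lambda_k\}$ and $r < 1$, the weighted averages $\bar{x}_N = \sum_{k=0}^{N-1} \psi_{k,N-1} x_k$ (with $\psi_{k,N-1} = \gamma_k^r/\sum_{i=0}^{N-1}\gamma_i^r$) of the iterates of the iteratively regularized incremental subgradient algorithm satisfy: $f(\bar{x}_N) - f^* \leq (\sum_{k=0}^{N-1}\gamma_k^r)^{-1} [m \sum_{k=0}^{N-1}\gamma_k^{r+1}(C_f^2 + \lambda_k^2 C_h^2) + m^2 C_f \sum_{k=0}^{N-1}\gamma_k^{r+1}(C_f + \lambda_k C_h) + 2M_h \sum_{k=0}^{N-1}\gamma_k^r \lambda_k + 2M^2 \gamma_{N-1}^{r-1}]$, where $M_h \geq \sup_{x\in X}|h(x)|$ and $M \geq \sup_{x \in X}\|x\|$. -/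

import Mathlib

/-! Each cycle of `m` projected steps acts as one subgradient step for `f` taken at the start
`x k` of the cycle: `2 γₖ (f xₖ - f x⋆) ≤ ‖xₖ - x⋆‖² - ‖xₖ₊₁ - x⋆‖²` plus an `O(γₖ²)` error from
the drift of the inner iterates and an `O(γₖ λₖ)` error from the oscillation of the regularizer
on `X`. Multiplying by `γₖ^(r-1)/2`, which is nondecreasing in `k` because `r < 1` and `γ` is
nonincreasing, and summing, Abel summation bounds the telescoping part by the last weight
times `(2M)²`. Jensen's inequality for the convex `f` moves the weighted average of the gaps
to the averaged iterate. -/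

open Filter Finset Real Set
open scoped RealInnerProductSpace Topology BigOperators

noncomputable section

abbrev Euc (n : ℕ) := EuclideanSpace ℝ (Fin n)

/-- `g` is a subgradient of `f` at `x`. -/
def IsSubgradAt {n : ℕ} (f : Euc n → ℝ) (x g : Euc n) : Prop :=
  ∀ y, f x + (inner ℝ g (y - x) : ℝ) ≤ f y

/-- `y` is the Euclidean projection of `p` onto `X`. -/
def IsProjOn {n : ℕ} (X : Set (Euc n)) (p y : Euc n) : Prop :=
  y ∈ X ∧ ∀ z ∈ X, ‖p - y‖ ≤ ‖p - z‖

lemma le_sub_sum_add_of_forall_succ_le {m : ℕ} {a : ℕ → ℝ} {b : Fin m → ℝ} {c : ℝ}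
    (h : ∀ i : Fin m, a ((i : ℕ) + 1) ≤ a i - b i + c) : a m ≤ a 0 - ∑ i, b i + m * c := by
  have htel : ∑ i : Fin m, (a ((i : ℕ) + 1) - a i) = a m - a 0 :=
    (Fin.sum_univ_eq_sum_range (fun i => a (i + 1) - a i) m).trans (sum_range_sub a m)
  have hle : ∑ i : Fin m, (a ((i : ℕ) + 1) - a i) ≤ ∑ i : Fin m, (c - b i) :=
    sum_le_sum fun i _ => by linarith [h i]
  rw [htel, sum_sub_distrib, sum_const, card_univ, Fintype.card_fin, nsmul_eq_mul] at hle
  linarith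

section Subgradients

variable {n : ℕ} {X : Set (Euc n)}

lemma IsProjOn.norm_sub_le (hX : Convex ℝ X) {p y : Euc n} (hp : IsProjOn X p y) {z : Euc n}
    (hz : z ∈ X) : ‖y - z‖ ≤ ‖p - z‖ := by
  obtain ⟨hy, hmin⟩ := hp
  have : Nonempty X := ⟨⟨y, hy⟩⟩
  have hinf : ‖p - y‖ = ⨅ w : X, ‖p - (w : Euc n)‖ :=
    le_antisymm (le_ciInf fun w => hmin w w.2)
      (ciInf_le ⟨0, by rintro _ ⟨w, rfl⟩; exact norm_nonneg _⟩ (⟨y, hy⟩ : X))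
  have hvar : ⟪p - y, z - y⟫ ≤ 0 := (norm_eq_iInf_iff_real_inner_le_zero hX hy).mp hinf z hz
  have hsplit : ‖p - z‖ ^ 2 = ‖p - y‖ ^ 2 - 2 * ⟪p - y, z - y⟫ + ‖y - z‖ ^ 2 := by
    rw [← sub_add_sub_cancel p y z, norm_add_sq_real, ← neg_sub z y, inner_neg_right]
    ring
  rw [← sq_le_sq₀ (norm_nonneg _) (norm_nonneg _)]
  nlinarith [sq_nonneg ‖p - y‖]

lemma IsProjOn.norm_sub_sq_le_of_step (hX : Convex ℝ X) {u g y z : Euc n} {t : ℝ}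
    (hp : IsProjOn X (u - t • g) y) (hz : z ∈ X) :
    ‖y - z‖ ^ 2 ≤ ‖u - z‖ ^ 2 - 2 * t * ⟪g, u - z⟫ + t ^ 2 * ‖g‖ ^ 2 := by
  have hexp : ‖u - t • g - z‖ ^ 2 = ‖u - z‖ ^ 2 - 2 * t * ⟪g, u - z⟫ + t ^ 2 * ‖g‖ ^ 2 := by
    rw [sub_right_comm, norm_sub_sq_real, real_inner_smul_right, real_inner_comm, norm_smul,
      Real.norm_eq_abs, mul_pow, sq_abs]
    ring
  rw [← hexp]
  exact pow_le_pow_left₀ (norm_nonneg _) (hp.norm_sub_le hX hz) 2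

lemma IsProjOn.norm_sub_le_of_step (hX : Convex ℝ X) {u g y : Euc n} {t : ℝ} (ht : 0 ≤ t)
    (hp : IsProjOn X (u - t • g) y) (hu : u ∈ X) : ‖y - u‖ ≤ t * ‖g‖ := by
  simpa [norm_smul, abs_of_nonneg ht] using hp.norm_sub_le hX hu

lemma IsSubgradAt.sub_le_inner {φ : Euc n → ℝ} {x g : Euc n} (hg : IsSubgradAt φ x g)
    (y : Euc n) : φ x - φ y ≤ ⟪g, x - y⟫ := by
  have := hg y
  rw [← neg_sub x y, inner_neg_right] at this
  linarith

lemma IsSubgradAt.sub_le_norm_mul {φ : Euc n → ℝ} {x g : Euc n} (hg : IsSubgradAt φ x g)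
    (y : Euc n) : φ x - φ y ≤ ‖g‖ * ‖x - y‖ :=
  (hg.sub_le_inner y).trans (real_inner_le_norm _ _)

lemma inner_regularized_subgrad_ge {φ h : Euc n → ℝ} {u x z a a₀ b : Euc n} {c Mh : ℝ}
    (ha : IsSubgradAt φ u a) (ha₀ : IsSubgradAt φ x a₀) (hb : IsSubgradAt h u b) (hc : 0 ≤ c)
    (hhu : |h u| ≤ Mh) (hhz : |h z| ≤ Mh) :
    φ x - φ z - (‖a₀‖ * ‖u - x‖ + 2 * c * Mh) ≤ ⟪a + c • b, u - z⟫ := by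
  have hφ := ha.sub_le_inner z
  have hh := hb.sub_le_inner z
  have hdrift := ha₀.sub_le_norm_mul u
  rw [norm_sub_rev] at hdrift
  have hosc : -(2 * Mh) ≤ h u - h z := by linarith [abs_le.mp hhu, abs_le.mp hhz]
  rw [inner_add_left, real_inner_smul_left]
  nlinarith [mul_le_mul_of_nonneg_left (hosc.trans hh) hc]

end Subgradients

section ProjectedSteps

variable {n m : ℕ} {X : Set (Euc n)} {y : ℕ → Euc n}

lemma mem_of_projSteps {p : Fin m → Euc n} (hy0 : y 0 ∈ X)
    (hy : ∀ i : Fin m, IsProjOn X (p i) (y ((i : ℕ) + 1))) : ∀ i ≤ m, y i ∈ X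
  | 0, _ => hy0
  | i + 1, hi => (hy ⟨i, hi⟩).1

lemma norm_sub_le_of_projSteps (hX : Convex ℝ X) {t D : ℝ} (ht : 0 ≤ t) {d : Fin m → Euc n}
    (hy0 : y 0 ∈ X) (hy : ∀ i : Fin m, IsProjOn X (y i - t • d i) (y ((i : ℕ) + 1)))
    (hd : ∀ i, ‖d i‖ ≤ D) : ∀ i ≤ m, ‖y i - y 0‖ ≤ i * (t * D)
  | 0, _ => by simp
  | i + 1, hi => by
    have hlast := (hy ⟨i, hi⟩).norm_sub_le_of_step hX ht
      (mem_of_projSteps hy0 hy i (Nat.le_of_succ_le hi))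
    calc ‖y (i + 1) - y 0‖ ≤ ‖y (i + 1) - y i‖ + ‖y i - y 0‖ :=
          norm_sub_le_norm_sub_add_norm_sub _ _ _
      _ ≤ t * D + i * (t * D) :=
        add_le_add (hlast.trans (mul_le_mul_of_nonneg_left (hd _) ht))
          (norm_sub_le_of_projSteps hX ht hy0 hy hd i (Nat.le_of_succ_le hi))
      _ = ((i + 1 : ℕ) : ℝ) * (t * D) := by push_cast; ring

lemma norm_sub_sq_le_of_projSteps (hX : Convex ℝ X) {t D ε : ℝ} (ht : 0 ≤ t)
    {d : Fin m → Euc n} {ψ : Fin m → ℝ} {z : Euc n} (hz : z ∈ X)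
    (hy : ∀ i : Fin m, IsProjOn X (y i - t • d i) (y ((i : ℕ) + 1)))
    (hd : ∀ i, ‖d i‖ ≤ D) (hψ : ∀ i, ψ i - ε ≤ ⟪d i, y i - z⟫) :
    ‖y m - z‖ ^ 2 ≤ ‖y 0 - z‖ ^ 2 - 2 * t * ∑ i, ψ i + m * (2 * t * ε + t ^ 2 * D ^ 2) := by
  rw [mul_sum]
  refine le_sub_sum_add_of_forall_succ_le (a := fun i => ‖y i - z‖ ^ 2) fun i => ?_
  have hproj := (hy i).norm_sub_sq_le_of_step hX hz
  have hdsq := pow_le_pow_left₀ (norm_nonneg _) (hd i) 2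
  nlinarith [mul_le_mul_of_nonneg_left (hψ i) ht, mul_le_mul_of_nonneg_left hdsq (sq_nonneg t)]

theorem incremental_cycle_sq_dist_le (hX : Convex ℝ X) {φ : Fin m → Euc n → ℝ}
    {gφ : Fin m → Euc n → Euc n} {h : Euc n → ℝ} {gh : Euc n → Euc n} {Cf Ch Mh t c : ℝ}
    (hgφ : ∀ i, ∀ u ∈ X, IsSubgradAt (φ i) u (gφ i u) ∧ ‖gφ i u‖ ≤ Cf)
    (hgh : ∀ u ∈ X, IsSubgradAt h u (gh u) ∧ ‖gh u‖ ≤ Ch) (hMh : ∀ u ∈ X, |h u| ≤ Mh)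
    (ht : 0 ≤ t) (hc : 0 ≤ c) (hy0 : y 0 ∈ X)
    (hy : ∀ i : Fin m, IsProjOn X (y i - t • (gφ i (y i) + c • gh (y i))) (y ((i : ℕ) + 1)))
    {z : Euc n} (hz : z ∈ X) :
    ‖y m - z‖ ^ 2 ≤ ‖y 0 - z‖ ^ 2 - 2 * t * ∑ i, (φ i (y 0) - φ i z)
      + m * t ^ 2 * ((Cf + c * Ch) ^ 2 + 2 * m * Cf * (Cf + c * Ch)) + 4 * m * t * c * Mh := by
  set D := Cf + c * Ch
  have hmem := mem_of_projSteps hy0 hy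
  have hd : ∀ i : Fin m, ‖gφ i (y i) + c • gh (y i)‖ ≤ D := fun i => by
    have hu := hmem i i.2.le
    calc _ ≤ ‖gφ i (y i)‖ + ‖c • gh (y i)‖ := norm_add_le _ _
      _ ≤ D := by
        rw [norm_smul, Real.norm_of_nonneg hc]
        exact add_le_add (hgφ i _ hu).2 (mul_le_mul_of_nonneg_left (hgh _ hu).2 hc)
  have hψ : ∀ i : Fin m, (φ i (y 0) - φ i z) - (Cf * (m * (t * D)) + 2 * c * Mh) ≤
      ⟪gφ i (y i) + c • gh (y i), y i - z⟫ := fun i => by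
    have hu := hmem i i.2.le
    have hCf : 0 ≤ Cf := (norm_nonneg _).trans (hgφ i _ hu).2
    have htD : 0 ≤ t * D := mul_nonneg ht ((norm_nonneg _).trans (hd i))
    have hdrift : ‖gφ i (y 0)‖ * ‖y i - y 0‖ ≤ Cf * (m * (t * D)) :=
      mul_le_mul (hgφ i _ hy0).2 ((norm_sub_le_of_projSteps hX ht hy0 hy hd i i.2.le).trans
        (mul_le_mul_of_nonneg_right (by exact_mod_cast i.2.le) htD)) (norm_nonneg _) hCf
    have := inner_regularized_subgrad_ge (hgφ i _ hu).1 (hgφ i _ hy0).1 (hgh _ hu).1 hc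
      (hMh _ hu) (hMh _ hz)
    linarith
  have hcycle := norm_sub_sq_le_of_projSteps hX ht hz hy hd hψ
  have hconst : (m : ℝ) * (2 * t * (Cf * (m * (t * D)) + 2 * c * Mh) + t ^ 2 * D ^ 2) =
      m * t ^ 2 * (D ^ 2 + 2 * m * Cf * D) + 4 * m * t * c * Mh := by ring
  linarith

end ProjectedSteps

lemma rpow_mul_le_of_two_mul_le {γ e Δ K L : ℝ} (r : ℝ) (hγ : 0 < γ)
    (h : 2 * γ * e ≤ Δ + γ ^ 2 * K + 4 * γ * L) :
    γ ^ r * e ≤ γ ^ (r - 1) / 2 * Δ + γ ^ (r + 1) * (K / 2) + γ ^ r * (2 * L) := by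
  have hscale :=
    mul_le_mul_of_nonneg_left h (div_pos (rpow_pos_of_pos hγ r) (mul_pos two_pos hγ)).le
  rw [rpow_sub_one hγ.ne', rpow_add_one hγ.ne']
  calc γ ^ r * e = γ ^ r / (2 * γ) * (2 * γ * e) := by field_simp
    _ ≤ γ ^ r / (2 * γ) * (Δ + γ ^ 2 * K + 4 * γ * L) := hscale
    _ = γ ^ r / γ / 2 * Δ + γ ^ r * γ * (K / 2) + γ ^ r * (2 * L) := by field_simp; ring

lemma regularized_step_const_le {m Cf Ch lam : ℝ} (hm : 1 ≤ m) (hCf : 0 ≤ Cf) (hCh : 0 ≤ Ch)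
    (hlam : 0 ≤ lam) :
    m * ((Cf + lam / m * Ch) ^ 2 + 2 * m * Cf * (Cf + lam / m * Ch)) / 2 ≤
      m * (Cf ^ 2 + lam ^ 2 * Ch ^ 2) + m ^ 2 * Cf * (Cf + lam * Ch) := by
  have hs0 : 0 ≤ lam / m * Ch := by positivity
  have hs : lam / m * Ch ≤ lam * Ch := by
    rw [div_mul_eq_mul_div]
    exact div_le_self (mul_nonneg hlam hCh) hm
  nlinarith [sq_nonneg (Cf - lam / m * Ch), mul_le_mul hs hs hs0 (hs0.trans hs),
    mul_le_mul_of_nonneg_left hs (by positivity : 0 ≤ m ^ 2 * Cf)]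

lemma rpow_mul_gap_le_of_cycle {γ lam e Δ m Cf Ch Mh : ℝ} (r : ℝ) (hγ : 0 < γ) (hm : 1 ≤ m)
    (hCf : 0 ≤ Cf) (hCh : 0 ≤ Ch) (hlam : 0 ≤ lam)
    (h : 2 * γ * e ≤ Δ + m * γ ^ 2 * ((Cf + lam / m * Ch) ^ 2 + 2 * m * Cf * (Cf + lam / m * Ch))
      + 4 * m * γ * (lam / m) * Mh) :
    γ ^ r * e ≤ γ ^ (r - 1) / 2 * Δ
      + γ ^ (r + 1) * (m * (Cf ^ 2 + lam ^ 2 * Ch ^ 2) + m ^ 2 * Cf * (Cf + lam * Ch))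
      + γ ^ r * (2 * lam * Mh) := by
  have hreg : 4 * m * γ * (lam / m) * Mh = 4 * γ * (lam * Mh) := by
    field_simp [(zero_lt_one.trans_le hm).ne']
  have hscaled := rpow_mul_le_of_two_mul_le r hγ
    (e := e) (Δ := Δ) (L := lam * Mh)
    (K := m * ((Cf + lam / m * Ch) ^ 2 + 2 * m * Cf * (Cf + lam / m * Ch))) (by linarith)
  have hconst := mul_le_mul_of_nonneg_left (regularized_step_const_le hm hCf hCh hlam)
    (rpow_pos_of_pos hγ (r + 1)).le
  linarith

lemma sum_range_succ_mul_sub_le_of_monotone {c a : ℕ → ℝ} {B : ℝ} (hc0 : ∀ k, 0 ≤ c k)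
    (hc : Monotone c) (ha0 : ∀ k, 0 ≤ a k) (haB : ∀ k, a k ≤ B) (N : ℕ) :
    ∑ k ∈ range (N + 1), c k * (a k - a (k + 1)) ≤ c N * B := by
  suffices key : ∀ N, ∑ k ∈ range (N + 1), c k * (a k - a (k + 1)) ≤ c N * (B - a (N + 1)) by
    nlinarith [key N, mul_nonneg (hc0 N) (ha0 (N + 1))]
  intro N
  induction N with
  | zero => simpa using mul_le_mul_of_nonneg_left (sub_le_sub_right (haB 0) _) (hc0 0)
  | succ N ih =>
    rw [sum_range_succ]
    nlinarith [mul_le_mul_of_nonneg_right (hc N.le_succ) (sub_nonneg.mpr (haB (N + 1)))]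

lemma sum_rpow_mul_le_of_step {γ lam a e K : ℕ → ℝ} {r Mh B : ℝ} (hr : r < 1)
    (hγ : ∀ k, 0 < γ k) (hγmono : Antitone γ) (ha0 : ∀ k, 0 ≤ a k) (haB : ∀ k, a k ≤ B)
    (hstep : ∀ k, γ k ^ r * e k ≤ γ k ^ (r - 1) / 2 * (a k - a (k + 1)) + γ k ^ (r + 1) * K k
      + γ k ^ r * (2 * lam k * Mh)) (N : ℕ) :
    ∑ k ∈ range (N + 1), γ k ^ r * e k ≤ ∑ k ∈ range (N + 1), γ k ^ (r + 1) * K k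
      + 2 * Mh * ∑ k ∈ range (N + 1), γ k ^ r * lam k + B / 2 * γ N ^ (r - 1) := by
  have hmono : Monotone fun k => γ k ^ (r - 1) / 2 := fun k l hkl =>
    div_le_div_of_nonneg_right
      (rpow_le_rpow_of_nonpos (hγ l) (hγmono hkl) (by linarith)) zero_le_two
  have habel := sum_range_succ_mul_sub_le_of_monotone
    (fun k => div_nonneg (rpow_pos_of_pos (hγ k) _).le zero_le_two) hmono ha0 haB N
  calc ∑ k ∈ range (N + 1), γ k ^ r * e k
      ≤ ∑ k ∈ range (N + 1), (γ k ^ (r - 1) / 2 * (a k - a (k + 1)) + γ k ^ (r + 1) * K k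
          + γ k ^ r * (2 * lam k * Mh)) := sum_le_sum fun k _ => hstep k
    _ = ∑ k ∈ range (N + 1), γ k ^ (r - 1) / 2 * (a k - a (k + 1))
          + ∑ k ∈ range (N + 1), γ k ^ (r + 1) * K k
          + 2 * Mh * ∑ k ∈ range (N + 1), γ k ^ r * lam k := by
      rw [sum_add_distrib, sum_add_distrib, mul_sum]
      congr 1
      exact sum_congr rfl fun k _ => by ring
    _ ≤ _ := by linarith

lemma sum_rpow_mul_le_of_cycle {γ lam a e : ℕ → ℝ} {r m Cf Ch Mh B : ℝ} (hr : r < 1)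
    (hγ : ∀ k, 0 < γ k) (hγmono : Antitone γ) (hm : 1 ≤ m) (hCf : 0 ≤ Cf) (hCh : 0 ≤ Ch)
    (hlam : ∀ k, 0 ≤ lam k) (ha0 : ∀ k, 0 ≤ a k) (haB : ∀ k, a k ≤ B)
    (hcycle : ∀ k, a (k + 1) ≤ a k - 2 * γ k * e k
      + m * γ k ^ 2 * ((Cf + lam k / m * Ch) ^ 2 + 2 * m * Cf * (Cf + lam k / m * Ch))
      + 4 * m * γ k * (lam k / m) * Mh) (N : ℕ) :
    ∑ k ∈ range (N + 1), γ k ^ r * e k ≤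
      m * ∑ k ∈ range (N + 1), γ k ^ (r + 1) * (Cf ^ 2 + lam k ^ 2 * Ch ^ 2)
        + m ^ 2 * Cf * ∑ k ∈ range (N + 1), γ k ^ (r + 1) * (Cf + lam k * Ch)
        + 2 * Mh * ∑ k ∈ range (N + 1), γ k ^ r * lam k + B / 2 * γ N ^ (r - 1) := by
  have hsum := sum_rpow_mul_le_of_step (e := e) (Mh := Mh) hr hγ hγmono ha0 haB (fun k =>
    rpow_mul_gap_le_of_cycle r (hγ k) hm hCf hCh (hlam k) (by linarith [hcycle k])) N
  have hsplit : ∑ k ∈ range (N + 1), γ k ^ (r + 1) *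
        (m * (Cf ^ 2 + lam k ^ 2 * Ch ^ 2) + m ^ 2 * Cf * (Cf + lam k * Ch)) =
      m * ∑ k ∈ range (N + 1), γ k ^ (r + 1) * (Cf ^ 2 + lam k ^ 2 * Ch ^ 2) +
        m ^ 2 * Cf * ∑ k ∈ range (N + 1), γ k ^ (r + 1) * (Cf + lam k * Ch) := by
    rw [mul_sum, mul_sum, ← sum_add_distrib]
    exact sum_congr rfl fun k _ => by ring
  linarith

lemma ConvexOn.sum {𝕜 E ι : Type*} [Field 𝕜] [LinearOrder 𝕜] [IsStrictOrderedRing 𝕜]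
    [AddCommGroup E] [Module 𝕜 E] {s : Set E} (hs : Convex 𝕜 s) {t : Finset ι}
    {f : ι → E → 𝕜} (hf : ∀ i ∈ t, ConvexOn 𝕜 s (f i)) :
    ConvexOn 𝕜 s fun x => ∑ i ∈ t, f i x := by
  classical
  induction t using Finset.induction_on with
  | empty => simpa using convexOn_const 0 hs
  | insert i t hi ih =>
    simp only [sum_insert hi]
    exact (hf i (mem_insert_self i t)).add (ih fun j hj => hf j (mem_insert_of_mem hj))

lemma ConvexOn.map_sum_div_sub_le {E ι : Type*} [AddCommGroup E] [Module ℝ E] {D : Set E}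
    {f : E → ℝ} (hf : ConvexOn ℝ D f) {s : Finset ι} {w : ι → ℝ} {p : ι → E}
    (hw : ∀ i ∈ s, 0 ≤ w i) (hs : 0 < ∑ i ∈ s, w i) (hp : ∀ i ∈ s, p i ∈ D) (c : ℝ) :
    f (∑ i ∈ s, (w i / ∑ j ∈ s, w j) • p i) - c ≤
      (∑ i ∈ s, w i)⁻¹ * ∑ i ∈ s, w i * (f (p i) - c) := by
  have hw1 : ∑ i ∈ s, w i / ∑ j ∈ s, w j = 1 := by rw [← sum_div, div_self hs.ne']
  have hjensen := hf.map_sum_le (fun i hi => div_nonneg (hw i hi) hs.le) hw1 hp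
  calc f (∑ i ∈ s, (w i / ∑ j ∈ s, w j) • p i) - c
      ≤ ∑ i ∈ s, (w i / ∑ j ∈ s, w j) • f (p i) - ∑ i ∈ s, w i / (∑ j ∈ s, w j) * c := by
        rw [← sum_mul, hw1, one_mul]
        linarith
    _ = _ := by
      rw [mul_sum, ← sum_sub_distrib]
      exact sum_congr rfl fun i _ => by rw [smul_eq_mul]; ring

theorem averaging_error_bound_general {n : ℕ} (X : Set (Euc n))
    (hXcv : Convex ℝ X)
    (m : ℕ) (hm : 1 ≤ m)
    (fi : Fin m → Euc n → ℝ) (hfi : ∀ i, ConvexOn ℝ Set.univ (fi i))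
    (f : Euc n → ℝ) (hfdef : f = fun y => ∑ i, fi i y)
    (h : Euc n → ℝ)
    (Cf Ch : ℝ)
    (gf : Fin m → Euc n → Euc n) (gh : Euc n → Euc n)
    (hgf : ∀ i, ∀ y ∈ X, IsSubgradAt (fi i) y (gf i y) ∧ ‖gf i y‖ ≤ Cf)
    (hgh : ∀ y ∈ X, IsSubgradAt h y (gh y) ∧ ‖gh y‖ ≤ Ch)
    (γ lam : ℕ → ℝ) (hγpos : ∀ k, 0 < γ k) (hlampos : ∀ k, 0 < lam k)
    (x : ℕ → Euc n) (xi : ℕ → ℕ → Euc n)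
    (hx0 : x 0 ∈ X) (hxi0 : ∀ k, xi k 0 = x k)
    (hrec : ∀ k, ∀ i (hi : i < m),
      IsProjOn X
        (xi k i - γ k • (gf ⟨i, hi⟩ (xi k i) + (lam k / (m : ℝ)) • gh (xi k i)))
        (xi k (i + 1)))
    (hnext : ∀ k, x (k + 1) = xi k m)
    (hγmono : Antitone γ)
    (r : ℝ) (hr : r < 1)
    (M Mh : ℝ) (hM : ∀ y ∈ X, ‖y‖ ≤ M) (hMh : ∀ y ∈ X, |h y| ≤ Mh)
    (fstar : ℝ) (xstar : Euc n) (hxstar : xstar ∈ X ∧ ∀ y ∈ X, f xstar ≤ f y)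
    (hfstar : fstar = f xstar)
    (N : ℕ) (hN : 1 ≤ N) :
    f (∑ k ∈ Finset.range N, (γ k ^ r / ∑ i ∈ Finset.range N, γ i ^ r) • x k) - fstar ≤
      (∑ k ∈ Finset.range N, γ k ^ r)⁻¹ *
        ((m : ℝ) * ∑ k ∈ Finset.range N, γ k ^ (r + 1) * (Cf ^ 2 + lam k ^ 2 * Ch ^ 2) +
          (m : ℝ) ^ 2 * Cf * ∑ k ∈ Finset.range N, γ k ^ (r + 1) * (Cf + lam k * Ch) +
          2 * Mh * ∑ k ∈ Finset.range N, γ k ^ r * lam k +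
          2 * M ^ 2 * γ (N - 1) ^ (r - 1)) := by
  obtain ⟨hxstarX, -⟩ := hxstar
  obtain ⟨N, rfl⟩ : ∃ N', N = N' + 1 := ⟨N - 1, by omega⟩
  have hxX : ∀ k, x k ∈ X := Nat.rec hx0 fun k hk =>
    hnext k ▸ mem_of_projSteps ((hxi0 k).symm ▸ hk) (fun i => hrec k i i.2) m le_rfl
  have hdist : ∀ k, ‖x k - xstar‖ ^ 2 ≤ 4 * M ^ 2 := fun k => by
    nlinarith [norm_sub_le (x k) xstar, hM _ (hxX k), hM _ hxstarX, norm_nonneg (x k - xstar)]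
  have hsum := sum_rpow_mul_le_of_cycle (a := fun k => ‖x k - xstar‖ ^ 2)
    (e := fun k => f (x k) - fstar) (m := m) hr hγpos hγmono (by exact_mod_cast hm)
    ((norm_nonneg _).trans (hgf ⟨0, hm⟩ _ hx0).2) ((norm_nonneg _).trans (hgh _ hx0).2)
    (fun k => (hlampos k).le) (fun k => sq_nonneg _) hdist (fun k => by
      have hcycle := incremental_cycle_sq_dist_le (y := xi k) hXcv hgf hgh hMh (hγpos k).le
        (div_nonneg (hlampos k).le m.cast_nonneg) ((hxi0 k).symm ▸ hxX k)
        (fun i => hrec k i i.2) hxstarX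
      rw [hxi0, ← hnext, sum_sub_distrib] at hcycle
      simpa only [hfstar, hfdef] using hcycle) N
  have hSpos : 0 < ∑ k ∈ range (N + 1), γ k ^ r :=
    sum_pos (fun k _ => rpow_pos_of_pos (hγpos k) r) nonempty_range_add_one
  calc _ ≤ (∑ k ∈ range (N + 1), γ k ^ r)⁻¹ * ∑ k ∈ range (N + 1), γ k ^ r * (f (x k) - fstar) :=
        (hfdef ▸ ConvexOn.sum convex_univ fun i _ => hfi i).map_sum_div_sub_le
          (fun k _ => (rpow_pos_of_pos (hγpos k) r).le) hSpos (fun k _ => mem_univ _) fstar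
    _ ≤ _ := by
      rw [Nat.add_sub_cancel]
      gcongr
      linarith

/-- error bound for the averaged iterates in terms of `f`. -/
theorem averaging_error_bound {n : ℕ} (X : Set (Euc n))
    (hXne : X.Nonempty) (hXcp : IsCompact X) (hXcv : Convex ℝ X)
    (m : ℕ) (hm : 1 ≤ m)
    (fi : Fin m → Euc n → ℝ) (hfi : ∀ i, ConvexOn ℝ Set.univ (fi i))
    (f : Euc n → ℝ) (hfdef : f = fun y => ∑ i, fi i y)
    (h : Euc n → ℝ) (μ : ℝ) (hμ : 0 < μ) (hh : StrongConvexOn Set.univ μ h)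
    (Cf Ch : ℝ)
    (gf : Fin m → Euc n → Euc n) (gh : Euc n → Euc n)
    (hgf : ∀ i, ∀ y ∈ X, IsSubgradAt (fi i) y (gf i y) ∧ ‖gf i y‖ ≤ Cf)
    (hgh : ∀ y ∈ X, IsSubgradAt h y (gh y) ∧ ‖gh y‖ ≤ Ch)
    (hCf : ∀ i, ∀ y ∈ X, ∀ g, IsSubgradAt (fi i) y g → ‖g‖ ≤ Cf)
    (hChb : ∀ y ∈ X, ∀ g, IsSubgradAt h y g → ‖g‖ ≤ Ch)
    (γ lam : ℕ → ℝ) (hγpos : ∀ k, 0 < γ k) (hlampos : ∀ k, 0 < lam k)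
    (x : ℕ → Euc n) (xi : ℕ → ℕ → Euc n)
    (hx0 : x 0 ∈ X) (hxi0 : ∀ k, xi k 0 = x k)
    (hrec : ∀ k, ∀ i (hi : i < m),
      IsProjOn X
        (xi k i - γ k • (gf ⟨i, hi⟩ (xi k i) + (lam k / (m : ℝ)) • gh (xi k i)))
        (xi k (i + 1)))
    (hnext : ∀ k, x (k + 1) = xi k m)
    (hγmono : Antitone γ) (hlammono : Antitone lam)
    (r : ℝ) (hr : r < 1)
    (M Mh : ℝ) (hM : ∀ y ∈ X, ‖y‖ ≤ M) (hMh : ∀ y ∈ X, |h y| ≤ Mh)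
    (fstar : ℝ) (xstar : Euc n) (hxstar : xstar ∈ X ∧ ∀ y ∈ X, f xstar ≤ f y)
    (hfstar : fstar = f xstar)
    (N : ℕ) (hN : 1 ≤ N) :
    f (∑ k ∈ Finset.range N, (γ k ^ r / ∑ i ∈ Finset.range N, γ i ^ r) • x k) - fstar ≤
      (∑ k ∈ Finset.range N, γ k ^ r)⁻¹ *
        ((m : ℝ) * ∑ k ∈ Finset.range N, γ k ^ (r + 1) * (Cf ^ 2 + lam k ^ 2 * Ch ^ 2) +
          (m : ℝ) ^ 2 * Cf * ∑ k ∈ Finset.range N, γ k ^ (r + 1) * (Cf + lam k * Ch) +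
          2 * Mh * ∑ k ∈ Finset.range N, γ k ^ r * lam k +
          2 * M ^ 2 * γ (N - 1) ^ (r - 1)) :=
  averaging_error_bound_general X hXcv m hm fi hfi f hfdef h Cf Ch gf gh hgf hgh γ lam hγpos hlampos
    x xi hx0 hxi0 hrec hnext hγmono r hr M Mh hM hMh fstar xstar hxstar hfstar N hN
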